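/- arXiv:1011.6651 — 2 statements merged into one kernel-verified Lean document; each statement's English description precedes it below -/
import Mathlib

section
/- Let γ₁, γ₂ : [0,1] → ℝ³ be continuously differentiable curves with disjoint images, and let (γ₁ⁿ)ₙ and (γ₂ⁿ)ₙ be sequences of C¹ curves [0,1] → ℝ³ such that γᵢⁿ → γᵢ and (γᵢⁿ)' → γᵢ' uniformly on [0,1] as n → ∞ (i = 1,2), with the images of γ₁ⁿ and γ₂ⁿ disjoint for each n. Then L(γ₁ⁿ, γ₂ⁿ) → L(γ₁, γ₂). In particular, the Gauss linking number of open chains is a continuous function of the chain coordinates, and as the endpoints of open chains tend to coincide, their Gauss linking number tends to the Gauss linking number of the resulting closed chains. -/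
/-!
The integrand of the Gauss linking number is the continuous function
`(a, b, c) ↦ det(a, b, c) / ‖c‖³` on `{c ≠ 0}`, evaluated along the jet
`(s, t) ↦ (γ₁'(s), γ₂'(t), γ₁(s) − γ₂(t))`. C¹-uniform convergence of the curves makes the jets
converge uniformly on the square `[0,1]²`. The limit jet maps the square into a compact subset of
`{c ≠ 0}`; on a compact thickening of it the integrand is uniformly continuous, so the integrands
converge uniformly on the square, and hence so do their integrals.
-/

open MeasureTheory Set Filter

/-- Scalar triple product `det(a, b, c)` of three vectors in ℝ³. -/
noncomputable def tripleProduct (a b c : EuclideanSpace ℝ (Fin 3)) : ℝ :=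
  Matrix.det (Matrix.of ![(a : Fin 3 → ℝ), (b : Fin 3 → ℝ), (c : Fin 3 → ℝ)])

/-- The Gauss linking number of two C¹ curves `γ₁ γ₂ : [0,1] → ℝ³`:
`L(γ₁,γ₂) = (1/4π) ∫₀¹∫₀¹ det(γ₁'(t), γ₂'(s), γ₁(t) − γ₂(s)) / ‖γ₁(t) − γ₂(s)‖³ dt ds`. -/
noncomputable def gaussLinkingNumber (γ₁ γ₂ : ℝ → EuclideanSpace ℝ (Fin 3)) : ℝ :=
  (1 / (4 * Real.pi)) *
    ∫ p in (Icc (0:ℝ) 1) ×ˢ (Icc (0:ℝ) 1),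
      tripleProduct (deriv γ₁ p.1) (deriv γ₂ p.2) (γ₁ p.1 - γ₂ p.2) /
        ‖γ₁ p.1 - γ₂ p.2‖ ^ 3

open Topology

local notation "E³" => EuclideanSpace ℝ (Fin 3)

theorem ContinuousOn.comp_tendstoUniformlyOn_of_isCompact {α ι Y Z : Type*}
    [PseudoMetricSpace Y] [ProperSpace Y] [UniformSpace Z] {g : Y → Z} {U : Set Y}
    {F : ι → α → Y} {f : α → Y} {l : Filter ι} {s : Set α}
    (hg : ContinuousOn g U) (hU : IsOpen U) (hfs : IsCompact (f '' s)) (hfU : MapsTo f s U)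
    (h : TendstoUniformlyOn F f l s) :
    TendstoUniformlyOn (fun i x => g (F i x)) (fun x => g (f x)) l s := by
  obtain ⟨δ, hδ, hδU⟩ := hfs.exists_cthickening_subset_open hU hfU.image_subset
  have hg_unif : UniformContinuousOn g (Metric.cthickening δ (f '' s)) :=
    hfs.cthickening.uniformContinuousOn_of_continuous (hg.mono hδU)
  refine hg_unif.comp_tendstoUniformlyOn_eventually ?_
    (fun x hx => Metric.self_subset_cthickening _ (mem_image_of_mem f hx)) h
  filter_upwards [Metric.tendstoUniformlyOn_iff.1 h δ hδ] with i hi x hx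
  exact Metric.mem_cthickening_of_dist_le _ _ δ _ (mem_image_of_mem f hx)
    (by rw [dist_comm]; exact (hi x hx).le)

theorem TendstoUniformlyOn.tendsto_setIntegral {α ι E : Type*} [MeasurableSpace α]
    [NormedAddCommGroup E] [NormedSpace ℝ E] {μ : Measure α} {l : Filter ι}
    [l.IsCountablyGenerated] {F : ι → α → E} {f : α → E} {s : Set α}
    (hs : MeasurableSet s) (hμs : μ s ≠ ⊤)
    (hF : ∀ᶠ i in l, AEStronglyMeasurable (F i) (μ.restrict s)) (hf : IntegrableOn f s μ)
    (h : TendstoUniformlyOn F f l s) :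
    Tendsto (fun i => ∫ x in s, F i x ∂μ) l (𝓝 (∫ x in s, f x ∂μ)) := by
  refine tendsto_integral_filter_of_dominated_convergence (fun x => ‖f x‖ + 1) hF ?_
    (hf.norm.add (integrableOn_const hμs)) ?_
  · filter_upwards [Metric.tendstoUniformlyOn_iff.1 h 1 one_pos] with i hi
    refine ae_restrict_of_forall_mem hs fun x hx => ?_
    calc ‖F i x‖ ≤ ‖f x‖ + dist (f x) (F i x) := by
          rw [dist_comm, dist_eq_norm]; exact norm_le_norm_add_norm_sub' _ _
      _ ≤ ‖f x‖ + 1 := by linarith [hi x hx]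
  · exact ae_restrict_of_forall_mem hs fun x hx => h.tendsto_at hx

theorem TendstoUniformlyOn.prodMk' {α ι β γ : Type*} [UniformSpace β] [UniformSpace γ]
    {l : Filter ι} {F : ι → α → β} {f : α → β} {G : ι → α → γ} {g : α → γ} {s : Set α}
    (hF : TendstoUniformlyOn F f l s) (hG : TendstoUniformlyOn G g l s) :
    TendstoUniformlyOn (fun i x => (F i x, G i x)) (fun x => (f x, g x)) l s :=
  fun u hu => (hF.prodMk hG u hu).diag_of_prod

theorem Continuous.tripleProduct {α : Type*} [TopologicalSpace α] {a b c : α → E³}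
    (ha : Continuous a) (hb : Continuous b) (hc : Continuous c) :
    Continuous fun x => tripleProduct (a x) (b x) (c x) := by
  unfold _root_.tripleProduct
  fun_prop

noncomputable def gaussIntegrand (x : E³ × E³ × E³) : ℝ :=
  tripleProduct x.1 x.2.1 x.2.2 / ‖x.2.2‖ ^ 3

theorem measurable_gaussIntegrand : Measurable gaussIntegrand := by
  unfold gaussIntegrand
  exact (continuous_fst.tripleProduct continuous_snd.fst continuous_snd.snd).measurable.div
    (continuous_snd.snd.norm.pow 3).measurable

theorem continuousOn_gaussIntegrand : ContinuousOn gaussIntegrand {x | x.2.2 ≠ 0} := by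
  unfold gaussIntegrand
  refine (continuous_fst.tripleProduct continuous_snd.fst continuous_snd.snd).continuousOn.div
    (continuous_snd.snd.norm.pow 3).continuousOn fun x hx => ?_
  exact pow_ne_zero 3 (norm_ne_zero_iff.2 hx)

/-- The integrand of `gaussLinkingNumber γ₁ γ₂` is `gaussIntegrand ∘ linkingJet γ₁ γ₂`. -/
noncomputable def linkingJet (γ₁ γ₂ : ℝ → E³) (p : ℝ × ℝ) : E³ × E³ × E³ :=
  (deriv γ₁ p.1, deriv γ₂ p.2, γ₁ p.1 - γ₂ p.2)

theorem continuous_linkingJet {γ₁ γ₂ : ℝ → E³} (h₁ : ContDiff ℝ 1 γ₁) (h₂ : ContDiff ℝ 1 γ₂) :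
    Continuous (linkingJet γ₁ γ₂) := by
  have := h₁.continuous_deriv le_rfl
  have := h₂.continuous_deriv le_rfl
  have := h₁.continuous
  have := h₂.continuous
  unfold linkingJet
  fun_prop

theorem tendstoUniformlyOn_linkingJet {ι : Type*} {l : Filter ι} {Γ₁ Γ₂ : ι → ℝ → E³}
    {γ₁ γ₂ : ℝ → E³} {s t : Set ℝ}
    (h₁ : TendstoUniformlyOn Γ₁ γ₁ l s) (h₂ : TendstoUniformlyOn Γ₂ γ₂ l t)
    (h₁' : TendstoUniformlyOn (fun i => deriv (Γ₁ i)) (deriv γ₁) l s)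
    (h₂' : TendstoUniformlyOn (fun i => deriv (Γ₂ i)) (deriv γ₂) l t) :
    TendstoUniformlyOn (fun i => linkingJet (Γ₁ i) (Γ₂ i)) (linkingJet γ₁ γ₂) l (s ×ˢ t) := by
  have fst_mem : s ×ˢ t ⊆ Prod.fst ⁻¹' s := prod_subset_preimage_fst s t
  have snd_mem : s ×ˢ t ⊆ Prod.snd ⁻¹' t := prod_subset_preimage_snd s t
  have hsub : TendstoUniformlyOn (fun i p => Γ₁ i p.1 - Γ₂ i p.2)
      (fun p => γ₁ p.1 - γ₂ p.2) l (s ×ˢ t) :=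
    ((h₁.comp Prod.fst).mono fst_mem).sub ((h₂.comp Prod.snd).mono snd_mem)
  exact ((h₁'.comp Prod.fst).mono fst_mem).prodMk'
    (((h₂'.comp Prod.snd).mono snd_mem).prodMk' hsub)

theorem gaussLinkingNumber_continuous_general
    (γ₁ γ₂ : ℝ → EuclideanSpace ℝ (Fin 3))
    (Γ₁ Γ₂ : ℕ → ℝ → EuclideanSpace ℝ (Fin 3))
    (h₁ : ContDiff ℝ 1 γ₁) (h₂ : ContDiff ℝ 1 γ₂)
    (hΓ₁ : ∀ n, ContDiff ℝ 1 (Γ₁ n)) (hΓ₂ : ∀ n, ContDiff ℝ 1 (Γ₂ n))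
    (hdisj : ∀ t ∈ Icc (0:ℝ) 1, ∀ s ∈ Icc (0:ℝ) 1, γ₁ t ≠ γ₂ s)
    (hconv₁ : TendstoUniformlyOn (fun n => Γ₁ n) γ₁ atTop (Icc (0:ℝ) 1))
    (hconv₂ : TendstoUniformlyOn (fun n => Γ₂ n) γ₂ atTop (Icc (0:ℝ) 1))
    (hconv₁' : TendstoUniformlyOn (fun n => deriv (Γ₁ n)) (deriv γ₁) atTop (Icc (0:ℝ) 1))
    (hconv₂' : TendstoUniformlyOn (fun n => deriv (Γ₂ n)) (deriv γ₂) atTop (Icc (0:ℝ) 1)) :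
    Tendsto (fun n => gaussLinkingNumber (Γ₁ n) (Γ₂ n)) atTop
      (nhds (gaussLinkingNumber γ₁ γ₂)) := by
  set K := Icc (0:ℝ) 1 ×ˢ Icc (0:ℝ) 1
  have hK : IsCompact K := isCompact_Icc.prod isCompact_Icc
  have hjet : Continuous (linkingJet γ₁ γ₂) := continuous_linkingJet h₁ h₂
  have hmaps : MapsTo (linkingJet γ₁ γ₂) K {x | x.2.2 ≠ 0} :=
    fun p hp => sub_ne_zero.2 (hdisj _ hp.1 _ hp.2)
  have hunif : TendstoUniformlyOn (fun n p => gaussIntegrand (linkingJet (Γ₁ n) (Γ₂ n) p))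
      (fun p => gaussIntegrand (linkingJet γ₁ γ₂ p)) atTop K :=
    continuousOn_gaussIntegrand.comp_tendstoUniformlyOn_of_isCompact
      (isOpen_ne_fun continuous_snd.snd continuous_const) (hK.image hjet) hmaps
      (tendstoUniformlyOn_linkingJet hconv₁ hconv₂ hconv₁' hconv₂')
  have hmeas : ∀ n, Measurable fun p => gaussIntegrand (linkingJet (Γ₁ n) (Γ₂ n) p) :=
    fun n => measurable_gaussIntegrand.comp (continuous_linkingJet (hΓ₁ n) (hΓ₂ n)).measurable
  have hint : IntegrableOn (fun p => gaussIntegrand (linkingJet γ₁ γ₂ p)) K :=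
    (continuousOn_gaussIntegrand.comp hjet.continuousOn hmaps).integrableOn_compact hK
  exact (hunif.tendsto_setIntegral hK.measurableSet hK.measure_lt_top.ne
    (Eventually.of_forall fun n => (hmeas n).aestronglyMeasurable) hint).const_mul _

/-- The Gauss linking number is continuous with respect to C¹-uniform
convergence of the curves: if `γᵢⁿ → γᵢ` and `(γᵢⁿ)' → γᵢ'` uniformly on `[0,1]`, with
images of `γ₁ⁿ` and `γ₂ⁿ` disjoint for each `n` and images of `γ₁` and `γ₂` disjoint,
then `L(γ₁ⁿ, γ₂ⁿ) → L(γ₁, γ₂)`. -/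
theorem gaussLinkingNumber_continuous
    (γ₁ γ₂ : ℝ → EuclideanSpace ℝ (Fin 3))
    (Γ₁ Γ₂ : ℕ → ℝ → EuclideanSpace ℝ (Fin 3))
    (h₁ : ContDiff ℝ 1 γ₁) (h₂ : ContDiff ℝ 1 γ₂)
    (hΓ₁ : ∀ n, ContDiff ℝ 1 (Γ₁ n)) (hΓ₂ : ∀ n, ContDiff ℝ 1 (Γ₂ n))
    (hdisj : ∀ t ∈ Icc (0:ℝ) 1, ∀ s ∈ Icc (0:ℝ) 1, γ₁ t ≠ γ₂ s)
    (hdisjn : ∀ n, ∀ t ∈ Icc (0:ℝ) 1, ∀ s ∈ Icc (0:ℝ) 1, Γ₁ n t ≠ Γ₂ n s)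
    (hconv₁ : TendstoUniformlyOn (fun n => Γ₁ n) γ₁ atTop (Icc (0:ℝ) 1))
    (hconv₂ : TendstoUniformlyOn (fun n => Γ₂ n) γ₂ atTop (Icc (0:ℝ) 1))
    (hconv₁' : TendstoUniformlyOn (fun n => deriv (Γ₁ n)) (deriv γ₁) atTop (Icc (0:ℝ) 1))
    (hconv₂' : TendstoUniformlyOn (fun n => deriv (Γ₂ n)) (deriv γ₂) atTop (Icc (0:ℝ) 1)) :
    Tendsto (fun n => gaussLinkingNumber (Γ₁ n) (Γ₂ n)) atTop
      (nhds (gaussLinkingNumber γ₁ γ₂)) :=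
  gaussLinkingNumber_continuous_general γ₁ γ₂ Γ₁ Γ₂ h₁ h₂ hΓ₁ hΓ₂ hdisj hconv₁ hconv₂ hconv₁'
    hconv₂'
end

section
/- Let γ₁, γ₂ : [0,1] → ℝ³ be continuously differentiable closed curves whose images are separated by a plane, i.e. there exist a unit vector u ∈ ℝ³ and a real number c with ⟨γ₁(t), u⟩ < c < ⟨γ₂(s), u⟩ for all t, s ∈ [0,1]. Then L(γ₁, γ₂) = 0; the two chains are algebraically unlinked. -/
open MeasureTheory Set Filter

/-!
Away from the ray `ℝ≥0 u`, the field `r / ‖r‖³` is the curl of the Dirac monopole potential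
`A r = u × r / (‖r‖ (‖r‖ - ⟪u, r⟫))`. When a plane with normal `u` separates the curves, every
difference `γ₁ t - γ₂ s` has `⟪u, γ₁ t - γ₂ s⟫ < 0` and so misses that ray; there the Gauss
integrand equals `-∂ₛ ⟪A (γ₁ t - γ₂ s), γ₁' t⟫ - ∂ₜ ⟪A (γ₁ t - γ₂ s), γ₂' s⟫`. By Fubini and the
fundamental theorem of calculus each term integrates to zero, because the curves are closed.
-/

open scoped RealInnerProductSpace Matrix

local notation "E3" => EuclideanSpace ℝ (Fin 3)

theorem tripleProduct_eq_coords (a b c : E3) :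
    tripleProduct a b c =
      a 0 * b 1 * c 2 - a 0 * b 2 * c 1 - a 1 * b 0 * c 2 + a 1 * b 2 * c 0
        + a 2 * b 0 * c 1 - a 2 * b 1 * c 0 := by
  simp [tripleProduct, Matrix.det_fin_three]

theorem inner_eq_coords (x y : E3) : ⟪x, y⟫ = x 0 * y 0 + x 1 * y 1 + x 2 * y 2 := by
  simp [PiLp.inner_apply, Fin.sum_univ_three, mul_comm]

theorem tripleProduct_eq_inner_cross (a b c : E3) :
    tripleProduct a b c = ⟪b, WithLp.toLp 2 (c ⨯₃ a)⟫ := by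
  simp [tripleProduct_eq_coords, inner_eq_coords, cross_apply]
  ring

theorem tripleProduct_neg_middle (a b c : E3) :
    tripleProduct a (-b) c = -tripleProduct a b c := by
  simp only [tripleProduct_eq_coords, PiLp.neg_apply]
  ring

-- Both sides are `⟪(x × y) × z, a × b⟫`, expanded by Binet–Cauchy and by the BAC–CAB rule.
theorem tripleProduct_mul_inner_sub_tripleProduct_mul_inner (x y z a b : E3) :
    tripleProduct x y a * ⟪z, b⟫ - tripleProduct x y b * ⟪z, a⟫ =
      ⟪x, z⟫ * tripleProduct y a b - ⟪y, z⟫ * tripleProduct x a b := by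
  simp only [tripleProduct_eq_coords, inner_eq_coords]
  ring

theorem HasDerivAt.norm {F : Type*} [NormedAddCommGroup F] [InnerProductSpace ℝ F]
    {f : ℝ → F} {f' : F} {x : ℝ} (hf : HasDerivAt f f' x) (h0 : f x ≠ 0) :
    HasDerivAt (fun y => ‖f y‖) (⟪f x, f'⟫ / ‖f x‖) x := by
  have hsq := hf.norm_sq.sqrt (pow_ne_zero 2 (norm_ne_zero_iff.mpr h0))
  simp only [Real.sqrt_sq (norm_nonneg _)] at hsq
  convert hsq using 1
  field_simp

theorem norm_ne_zero_of_inner_ne_norm {F : Type*} [NormedAddCommGroup F]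
    [InnerProductSpace ℝ F] {u r : F} (hr : ⟪u, r⟫ ≠ ‖r‖) : ‖r‖ ≠ 0 := by
  rintro h
  simp [norm_eq_zero.mp h] at hr

/-- `⟪A r, w⟫` for the monopole potential `A` above; when `‖u‖ = 1` the denominator vanishes
exactly on the ray `ℝ≥0 u`. -/
noncomputable def monopolePotential (u r w : E3) : ℝ :=
  tripleProduct u r w / (‖r‖ * (‖r‖ - ⟪u, r⟫))

noncomputable def monopolePotentialDeriv (u r w v : E3) : ℝ :=
  (tripleProduct u v w * (‖r‖ * (‖r‖ - ⟪u, r⟫)) -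
      tripleProduct u r w * (⟪r, v⟫ * (2 * ‖r‖ - ⟪u, r⟫) / ‖r‖ - ‖r‖ * ⟪u, v⟫)) /
    (‖r‖ * (‖r‖ - ⟪u, r⟫)) ^ 2

theorem monopolePotentialDeriv_neg (u r w v : E3) :
    monopolePotentialDeriv u r w (-v) = -monopolePotentialDeriv u r w v := by
  simp only [monopolePotentialDeriv, tripleProduct_neg_middle, inner_neg_right]
  ring

theorem HasDerivAt.monopolePotential {f : ℝ → E3} {v : E3} {x : ℝ} (hf : HasDerivAt f v x)
    (u w : E3) (hx : ⟪u, f x⟫ ≠ ‖f x‖) :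
    HasDerivAt (fun y => monopolePotential u (f y) w) (monopolePotentialDeriv u (f x) w v) x := by
  have hn : ‖f x‖ ≠ 0 := norm_ne_zero_of_inner_ne_norm hx
  have hD : ‖f x‖ - ⟪u, f x⟫ ≠ 0 := sub_ne_zero.mpr hx.symm
  have hnorm := hf.norm (norm_ne_zero_iff.mp hn)
  have htriple : HasDerivAt (fun y => tripleProduct u (f y) w) (tripleProduct u v w) x := by
    simpa only [tripleProduct_eq_inner_cross, inner_zero_right, zero_add] using
      hf.inner ℝ (hasDerivAt_const x _)
  have hinner : HasDerivAt (fun y => ⟪u, f y⟫) ⟪u, v⟫ x := by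
    simpa using (hasDerivAt_const x u).inner ℝ hf
  refine (htriple.div (hnorm.mul (hnorm.sub hinner)) (mul_ne_zero hn hD)).congr_deriv ?_
  simp only [monopolePotentialDeriv, Pi.mul_apply, Pi.sub_apply]
  field_simp
  ring

theorem continuousAt_monopolePotentialDeriv (u : E3) {r : E3} (hr : ⟪u, r⟫ ≠ ‖r‖) (w v : E3) :
    ContinuousAt (fun q : E3 × E3 × E3 => monopolePotentialDeriv u q.1 q.2.1 q.2.2) (r, w, v) := by
  have hn : ‖r‖ ≠ 0 := norm_ne_zero_of_inner_ne_norm hr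
  have hD : ‖r‖ - ⟪u, r⟫ ≠ 0 := sub_ne_zero.mpr hr.symm
  simp only [monopolePotentialDeriv, tripleProduct_eq_coords]
  fun_prop (disch := simp [hn, hD])

theorem continuousOn_monopolePotentialDeriv {X : Type*} [TopologicalSpace X] (u : E3)
    {r w v : X → E3} (hr : Continuous r) (hw : Continuous w) (hv : Continuous v) {s : Set X}
    (hs : ∀ x ∈ s, ⟪u, r x⟫ ≠ ‖r x‖) :
    ContinuousOn (fun x => monopolePotentialDeriv u (r x) (w x) (v x)) s :=
  fun x hx => ContinuousAt.comp_continuousWithinAt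
    (g := fun q : E3 × E3 × E3 => monopolePotentialDeriv u q.1 q.2.1 q.2.2)
    (f := fun x => (r x, w x, v x))
    (continuousAt_monopolePotentialDeriv u (hs x hx) (w x) (v x))
    (hr.prodMk (hw.prodMk hv)).continuousWithinAt

theorem monopolePotentialDeriv_sub_monopolePotentialDeriv {u r : E3} (hu : ‖u‖ = 1)
    (hr : ⟪u, r⟫ ≠ ‖r‖) (a b : E3) :
    monopolePotentialDeriv u r a b - monopolePotentialDeriv u r b a =
      tripleProduct a b r / ‖r‖ ^ 3 := by
  have hn : ‖r‖ ≠ 0 := norm_ne_zero_of_inner_ne_norm hr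
  have hD : ‖r‖ - ⟪u, r⟫ ≠ 0 := sub_ne_zero.mpr hr.symm
  have hr₁ := tripleProduct_mul_inner_sub_tripleProduct_mul_inner u r r a b
  have hu₁ := tripleProduct_mul_inner_sub_tripleProduct_mul_inner u r u a b
  rw [real_inner_self_eq_norm_sq] at hr₁
  rw [real_inner_self_eq_norm_sq, hu, one_pow, one_mul, real_inner_comm u r] at hu₁
  have hswap : tripleProduct u b a = -tripleProduct u a b := by
    simp only [tripleProduct_eq_coords]; ring
  have hcycle : tripleProduct r a b = tripleProduct a b r := by
    simp only [tripleProduct_eq_coords]; ring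
  unfold monopolePotentialDeriv
  rw [hswap, ← hcycle]
  field_simp
  linear_combination (⟪u, r⟫ - 2 * ‖r‖) * hr₁ + ‖r‖ ^ 2 * hu₁

theorem setIntegral_Icc_prod_Icc_eq_zero_of_hasDerivAt_snd {a b c d : ℝ} (hcd : c ≤ d)
    {g F : ℝ × ℝ → ℝ} (hg : ContinuousOn g (Icc a b ×ˢ Icc c d))
    (hF : ∀ p ∈ Icc a b ×ˢ Icc c d, HasDerivAt (fun s => F (p.1, s)) (g p) p.2)
    (hFcd : ∀ t ∈ Icc a b, F (t, c) = F (t, d)) :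
    ∫ p in Icc a b ×ˢ Icc c d, g p = 0 := by
  rw [Measure.volume_eq_prod, setIntegral_prod _
    (hg.integrableOn_compact (isCompact_Icc.prod isCompact_Icc))]
  refine setIntegral_eq_zero_of_forall_eq_zero fun t ht => ?_
  have hslice : ContinuousOn (fun s => g (t, s)) (Icc c d) :=
    hg.comp (by fun_prop) fun s hs => ⟨ht, hs⟩
  rw [integral_Icc_eq_integral_Ioc, ← intervalIntegral.integral_of_le hcd,
    intervalIntegral.integral_eq_sub_of_hasDerivAt (f := fun s => F (t, s))
      (fun s hs => hF (t, s) ⟨ht, uIcc_of_le hcd ▸ hs⟩) (hslice.intervalIntegrable_of_Icc hcd),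
    hFcd t ht, sub_self]

theorem setIntegral_Icc_prod_Icc_eq_zero_of_hasDerivAt_fst {a b c d : ℝ} (hab : a ≤ b)
    {g F : ℝ × ℝ → ℝ} (hg : ContinuousOn g (Icc a b ×ˢ Icc c d))
    (hF : ∀ p ∈ Icc a b ×ˢ Icc c d, HasDerivAt (fun t => F (t, p.2)) (g p) p.1)
    (hFab : ∀ s ∈ Icc c d, F (a, s) = F (b, s)) :
    ∫ p in Icc a b ×ˢ Icc c d, g p = 0 := by
  have hswap : ∫ p in Icc c d ×ˢ Icc a b, g p.swap = 0 :=
    setIntegral_Icc_prod_Icc_eq_zero_of_hasDerivAt_snd hab (F := fun p => F p.swap)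
      (hg.comp continuous_swap.continuousOn fun p hp => ⟨hp.2, hp.1⟩)
      (fun p hp => hF p.swap ⟨hp.2, hp.1⟩) hFab
  rwa [Measure.volume_eq_prod, setIntegral_prod_swap] at hswap

theorem gaussLinkingNumber_eq_zero_of_inner_ne_norm {γ₁ γ₂ : ℝ → E3}
    (h₁ : ContDiff ℝ 1 γ₁) (h₂ : ContDiff ℝ 1 γ₂) (hc₁ : γ₁ 0 = γ₁ 1) (hc₂ : γ₂ 0 = γ₂ 1)
    {u : E3} (hu : ‖u‖ = 1)
    (hray : ∀ t ∈ Icc (0:ℝ) 1, ∀ s ∈ Icc (0:ℝ) 1, ⟪u, γ₁ t - γ₂ s⟫ ≠ ‖γ₁ t - γ₂ s‖) :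
    gaussLinkingNumber γ₁ γ₂ = 0 := by
  set S := Icc (0:ℝ) 1 ×ˢ Icc (0:ℝ) 1
  have hoff : ∀ p ∈ S, ⟪u, γ₁ p.1 - γ₂ p.2⟫ ≠ ‖γ₁ p.1 - γ₂ p.2‖ :=
    fun p hp => hray _ hp.1 _ hp.2
  have hd₁ (t : ℝ) : HasDerivAt γ₁ (deriv γ₁ t) t := (h₁.differentiable one_ne_zero t).hasDerivAt
  have hd₂ (s : ℝ) : HasDerivAt γ₂ (deriv γ₂ s) s := (h₂.differentiable one_ne_zero s).hasDerivAt
  have hγ₁ := h₁.continuous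
  have hγ₂ := h₂.continuous
  have hγ₁' := h₁.continuous_deriv le_rfl
  have hγ₂' := h₂.continuous_deriv le_rfl
  have hcont₁ := continuousOn_monopolePotentialDeriv u (w := fun p : ℝ × ℝ => deriv γ₁ p.1)
    (v := fun p => deriv γ₂ p.2) (by fun_prop) (by fun_prop) (by fun_prop) hoff
  have hcont₂ := continuousOn_monopolePotentialDeriv u (w := fun p : ℝ × ℝ => deriv γ₂ p.2)
    (v := fun p => deriv γ₁ p.1) (by fun_prop) (by fun_prop) (by fun_prop) hoff
  have hG₁ : ∫ p in S,
      monopolePotentialDeriv u (γ₁ p.1 - γ₂ p.2) (deriv γ₁ p.1) (deriv γ₂ p.2) = 0 := by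
    refine setIntegral_Icc_prod_Icc_eq_zero_of_hasDerivAt_snd zero_le_one
      (F := fun p => -monopolePotential u (γ₁ p.1 - γ₂ p.2) (deriv γ₁ p.1)) hcont₁
      (fun p hp => ?_) (fun t _ => by simp only [hc₂])
    have hderiv := (((hd₂ p.2).const_sub (γ₁ p.1)).monopolePotential u (deriv γ₁ p.1)
      (hoff p hp)).fun_neg
    rwa [monopolePotentialDeriv_neg, neg_neg] at hderiv
  have hG₂ : ∫ p in S,
      monopolePotentialDeriv u (γ₁ p.1 - γ₂ p.2) (deriv γ₂ p.2) (deriv γ₁ p.1) = 0 :=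
    setIntegral_Icc_prod_Icc_eq_zero_of_hasDerivAt_fst zero_le_one
      (F := fun p => monopolePotential u (γ₁ p.1 - γ₂ p.2) (deriv γ₂ p.2)) hcont₂
      (fun p hp => ((hd₁ p.1).sub_const (γ₂ p.2)).monopolePotential u (deriv γ₂ p.2) (hoff p hp))
      (fun s _ => by simp only [hc₁])
  have hcurl : EqOn
      (fun p : ℝ × ℝ => tripleProduct (deriv γ₁ p.1) (deriv γ₂ p.2) (γ₁ p.1 - γ₂ p.2) /
        ‖γ₁ p.1 - γ₂ p.2‖ ^ 3)
      (fun p => monopolePotentialDeriv u (γ₁ p.1 - γ₂ p.2) (deriv γ₁ p.1) (deriv γ₂ p.2) -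
        monopolePotentialDeriv u (γ₁ p.1 - γ₂ p.2) (deriv γ₂ p.2) (deriv γ₁ p.1)) S :=
    fun p hp => (monopolePotentialDeriv_sub_monopolePotentialDeriv hu (hoff p hp) _ _).symm
  have hS : IsCompact S := isCompact_Icc.prod isCompact_Icc
  rw [gaussLinkingNumber, setIntegral_congr_fun hS.measurableSet hcurl,
    integral_sub (hcont₁.integrableOn_compact hS) (hcont₂.integrableOn_compact hS), hG₁, hG₂,
    sub_self, mul_zero]

theorem gaussLinkingNumber_separated_by_plane_general
    (γ₁ γ₂ : ℝ → EuclideanSpace ℝ (Fin 3))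
    (h₁ : ContDiff ℝ 1 γ₁) (h₂ : ContDiff ℝ 1 γ₂)
    (hc₁ : γ₁ 0 = γ₁ 1) (hc₂ : γ₂ 0 = γ₂ 1)
    (u : EuclideanSpace ℝ (Fin 3)) (hu : ‖u‖ = 1) (c : ℝ)
    (hsep : ∀ t ∈ Icc (0:ℝ) 1, ∀ s ∈ Icc (0:ℝ) 1,
      inner ℝ (γ₁ t) u < c ∧ c < (inner ℝ (γ₂ s) u : ℝ)) :
    gaussLinkingNumber γ₁ γ₂ = 0 := by
  refine gaussLinkingNumber_eq_zero_of_inner_ne_norm h₁ h₂ hc₁ hc₂ hu fun t ht s hs => ?_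
  have hneg : ⟪u, γ₁ t - γ₂ s⟫ < 0 := by
    rw [inner_sub_right, real_inner_comm (γ₁ t), real_inner_comm (γ₂ s)]
    linarith [hsep t ht s hs]
  exact (hneg.trans_le (norm_nonneg _)).ne

/-- Two C¹ closed curves whose images are separated by a plane have Gauss
linking number zero; they are algebraically unlinked. -/
theorem gaussLinkingNumber_separated_by_plane
    (γ₁ γ₂ : ℝ → EuclideanSpace ℝ (Fin 3))
    (h₁ : ContDiff ℝ 1 γ₁) (h₂ : ContDiff ℝ 1 γ₂)
    (hc₁ : γ₁ 0 = γ₁ 1) (hc₁' : deriv γ₁ 0 = deriv γ₁ 1)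
    (hc₂ : γ₂ 0 = γ₂ 1) (hc₂' : deriv γ₂ 0 = deriv γ₂ 1)
    (u : EuclideanSpace ℝ (Fin 3)) (hu : ‖u‖ = 1) (c : ℝ)
    (hsep : ∀ t ∈ Icc (0:ℝ) 1, ∀ s ∈ Icc (0:ℝ) 1,
      inner ℝ (γ₁ t) u < c ∧ c < (inner ℝ (γ₂ s) u : ℝ)) :
    gaussLinkingNumber γ₁ γ₂ = 0 :=
  gaussLinkingNumber_separated_by_plane_general γ₁ γ₂ h₁ h₂ hc₁ hc₂ u hu c hsep
end
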